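/- Let n ≥ 2 and W ∈ ℝⁿ. For each K with 1 ≤ K ≤ n−1, let S_top(K) be a set of indices of the K largest entries of W and S_bot(K) a set of indices of the K smallest entries of W. Then the maximum of D(S) over all subsets S ⊆ {1,…,n} with 0 < |S| < n equals max_{1 ≤ K ≤ n−1} max( D(S_top(K)), D(S_bot(K)) ). In particular the globally optimal mask for the binarization objective can be found among the 2(n−1) prefix/suffix masks of a sorted order of W, as exploited by the prefix-sum algorithm. -/

import Mathlib

/-!
For a mask `S` of size `K`, the objective depends only on `K` and on `s = ∑_{i∈S} W i`: it is
`s² / K + (T - s)² / (n - K)` with `T = ∑ W`, a convex function of `s`. An exchange argument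
shows that `s` lies between the sums over the `K` smallest and the `K` largest entries, so by
convexity `D S` is bounded by the objective of one of those two masks.
-/

open Finset Set

lemma convexOn_sq_div_add_sq_div {u v : ℝ} (hu : 0 ≤ u) (hv : 0 ≤ v) (T : ℝ) :
    ConvexOn ℝ univ fun x : ℝ => x ^ 2 / u + (T - x) ^ 2 / v := by
  have hsq : ConvexOn ℝ univ fun x : ℝ => x ^ 2 := even_two.convexOn_pow
  have h := (hsq.smul (inv_nonneg.2 hu)).add ((hsq.translate_right (-T)).smul (inv_nonneg.2 hv))
  refine h.congr fun x _ => ?_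
  simp only [Pi.add_apply, Function.comp_apply, smul_eq_mul]
  ring

namespace Finset
variable {ι M : Type*} [AddCommMonoid M] [LinearOrder M] [IsOrderedAddMonoid M] {f : ι → M}
  {s t : Finset ι}

theorem sum_le_sum_of_card_eq_of_forall_le (hst : #s = #t) (h : ∀ i ∈ s, ∀ j ∈ t, f i ≤ f j) :
    ∑ i ∈ s, f i ≤ ∑ i ∈ t, f i := by
  obtain rfl | ht := t.eq_empty_or_nonempty
  · rw [card_empty, card_eq_zero] at hst
    rw [hst]
  calc ∑ i ∈ s, f i ≤ #s • t.inf' ht f :=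
        sum_le_card_nsmul _ _ _ fun i hi => le_inf' ht _ fun j hj => h i hi j hj
    _ = #t • t.inf' ht f := by rw [hst]
    _ ≤ ∑ i ∈ t, f i := card_nsmul_le_sum _ _ _ fun j hj => inf'_le f hj

variable [DecidableEq ι]

theorem sum_le_sum_of_card_eq_of_forall_notMem_le (hst : #s = #t)
    (ht : ∀ i ∈ t, ∀ j ∉ t, f j ≤ f i) : ∑ i ∈ s, f i ≤ ∑ i ∈ t, f i := by
  rw [← sum_inter_add_sum_sdiff s t, ← sum_inter_add_sum_sdiff t s, inter_comm]
  gcongr 1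
  exact sum_le_sum_of_card_eq_of_forall_le (card_sdiff_comm hst)
    fun i hi j hj => ht j (mem_sdiff.1 hj).1 i (mem_sdiff.1 hi).2

theorem sum_le_sum_of_card_eq_of_forall_le_notMem (hst : #s = #t)
    (hs : ∀ i ∈ s, ∀ j ∉ s, f i ≤ f j) : ∑ i ∈ s, f i ≤ ∑ i ∈ t, f i :=
  sum_le_sum_of_card_eq_of_forall_notMem_le (M := Mᵒᵈ) hst.symm hs

end Finset

/-- The maximum of the objective `D` over all proper masks
(`0 < |S| < n`) equals `max_{1 ≤ K ≤ n−1} max(D(S_top(K)), D(S_bot(K)))`, where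
`S_top(K)`/`S_bot(K)` select the `K` largest/smallest entries of `W`: stated as
the latter quantity being the greatest value of `D` over proper masks. -/
theorem dabnet_global_max_prefix_suffix (n : ℕ) (hn : 2 ≤ n) (W : Fin n → ℝ)
    (Stop Sbot : ℕ → Finset (Fin n))
    (htopcard : ∀ K, 1 ≤ K → K ≤ n - 1 → (Stop K).card = K)
    (hbotcard : ∀ K, 1 ≤ K → K ≤ n - 1 → (Sbot K).card = K)
    (htop : ∀ K, 1 ≤ K → K ≤ n - 1 → ∀ i ∈ Stop K, ∀ j ∉ Stop K, W j ≤ W i)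
    (hbot : ∀ K, 1 ≤ K → K ≤ n - 1 → ∀ i ∈ Sbot K, ∀ j ∉ Sbot K, W i ≤ W j)
    (D : Finset (Fin n) → ℝ)
    (hD : ∀ S : Finset (Fin n),
      D S = (∑ i ∈ S, W i) ^ 2 / (S.card : ℝ)
            + (∑ i ∈ Sᶜ, W i) ^ 2 / ((n : ℝ) - (S.card : ℝ))) :
    IsGreatest {x : ℝ | ∃ S : Finset (Fin n), 0 < S.card ∧ S.card < n ∧ D S = x}
      ((Finset.Icc 1 (n - 1)).sup'
        (Finset.nonempty_Icc.mpr (by omega))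
        (fun K => max (D (Stop K)) (D (Sbot K)))) := by
  set T := ∑ i, W i
  have hD' (S : Finset (Fin n)) :
      D S = (∑ i ∈ S, W i) ^ 2 / #S + (T - ∑ i ∈ S, W i) ^ 2 / (n - #S) := by
    rw [hD, eq_sub_of_add_eq (sum_compl_add_sum S W)]
  constructor
  · obtain ⟨K, hK, hsup⟩ := exists_mem_eq_sup' (nonempty_Icc.mpr (by omega : 1 ≤ n - 1))
      fun K => max (D (Stop K)) (D (Sbot K))
    obtain ⟨hK1, hK2⟩ := mem_Icc.1 hK
    have hcT := htopcard K hK1 hK2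
    have hcB := hbotcard K hK1 hK2
    rw [hsup]
    rcases max_choice (D (Stop K)) (D (Sbot K)) with h | h
    · exact ⟨Stop K, by omega, by omega, h.symm⟩
    · exact ⟨Sbot K, by omega, by omega, h.symm⟩
  · rintro _ ⟨S, hpos, hlt, rfl⟩
    have hK1 : 1 ≤ #S := hpos
    have hK2 : #S ≤ n - 1 := by omega
    refine le_trans ?_ (le_sup' (fun K => max (D (Stop K)) (D (Sbot K))) (mem_Icc.2 ⟨hK1, hK2⟩))
    have hcT := htopcard _ hK1 hK2
    have hcB := hbotcard _ hK1 hK2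
    have hconv := convexOn_sq_div_add_sq_div (Nat.cast_nonneg #S)
      (sub_nonneg.2 (Nat.cast_le.2 hlt.le)) T
    rw [max_comm, hD' S, hD' (Stop _), hD' (Sbot _), hcT, hcB]
    exact hconv.le_max_of_mem_Icc trivial trivial
      ⟨sum_le_sum_of_card_eq_of_forall_le_notMem hcB (hbot _ hK1 hK2),
        sum_le_sum_of_card_eq_of_forall_notMem_le hcT.symm (htop _ hK1 hK2)⟩
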